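/- Let X be a Banach space and let E be a Banach lattice with property (d). A bounded linear operator T : X → E is almost limited if and only if ‖T*(f_n)‖ → 0 for every weak* null sequence (f_n) in the dual E* consisting of positive and pairwise disjoint elements. -/

import Mathlib

open Filter Topology Metric Set NormedSpace BoundedContinuousFunction

noncomputable section

/-- The value `|f| x` of the modulus of a functional `f` in the dual of a Banach lattice,
at a positive element `x`, given by the Riesz–Kantorovich formula. -/
def dualAbs {E : Type*} [NormedAddCommGroup E] [Lattice E] [HasSolidNorm E] [IsOrderedAddMonoid E] [NormedSpace ℝ E]
    (f : E →L[ℝ] ℝ) (x : E) : ℝ :=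
  sSup {r : ℝ | ∃ z : E, |z| ≤ x ∧ r = |f z|}

/-- Two functionals `f, g` on a Banach lattice are disjoint, i.e. `|f| ⊓ |g| = 0` in the dual
lattice; by the Riesz–Kantorovich formula this means that for every `x ≥ 0` the infimum of
`|f| y + |g| (x - y)` over `0 ≤ y ≤ x` is `0`. -/
def DualDisjoint {E : Type*} [NormedAddCommGroup E] [Lattice E] [HasSolidNorm E] [IsOrderedAddMonoid E] [NormedSpace ℝ E]
    (f g : E →L[ℝ] ℝ) : Prop :=
  ∀ x : E, 0 ≤ x → ∀ ε : ℝ, 0 < ε →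
    ∃ y : E, 0 ≤ y ∧ y ≤ x ∧ dualAbs f y + dualAbs g (x - y) < ε

/-- A sequence of functionals is weak* null if it converges to `0` pointwise. -/
def WeakStarNull {E : Type*} [NormedAddCommGroup E] [NormedSpace ℝ E]
    (f : ℕ → E →L[ℝ] ℝ) : Prop :=
  ∀ x : E, Tendsto (fun n => f n x) atTop (𝓝 0)

/-- A functional on a Banach lattice is positive if it is nonnegative on the positive cone. -/
def PositiveFunctional {E : Type*} [NormedAddCommGroup E] [Lattice E] [HasSolidNorm E] [IsOrderedAddMonoid E] [NormedSpace ℝ E]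
    (f : E →L[ℝ] ℝ) : Prop :=
  ∀ x : E, 0 ≤ x → 0 ≤ f x

/-- An operator between Banach lattices is positive if it maps the positive cone into
the positive cone. -/
def IsPositiveOp {E F : Type*} [NormedAddCommGroup E] [Lattice E] [HasSolidNorm E] [IsOrderedAddMonoid E] [NormedSpace ℝ E]
    [NormedAddCommGroup F] [Lattice F] [HasSolidNorm F] [IsOrderedAddMonoid F] [NormedSpace ℝ F] (T : E →L[ℝ] F) : Prop :=
  ∀ x : E, 0 ≤ x → 0 ≤ T x

/-- An operator `T : X → E` into a Banach lattice is almost limited if `‖T* fₙ‖ → 0` for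
every disjoint weak* null sequence `(fₙ)` in `E*`. -/
def AlmostLimited {X E : Type*} [NormedAddCommGroup X] [NormedSpace ℝ X]
    [NormedAddCommGroup E] [Lattice E] [HasSolidNorm E] [IsOrderedAddMonoid E] [NormedSpace ℝ E] (T : X →L[ℝ] E) : Prop :=
  ∀ f : ℕ → E →L[ℝ] ℝ, WeakStarNull f → Pairwise (fun n m => DualDisjoint (f n) (f m)) →
    Tendsto (fun n => ‖(f n).comp T‖) atTop (𝓝 0)

/-- A Banach lattice `E` has property (d) if `|fₙ| → 0` in the weak* topology for every
disjoint weak* null sequence `(fₙ)` in `E*` (it suffices to test `|fₙ|` on the positive cone). -/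
def PropertyD (E : Type*) [NormedAddCommGroup E] [Lattice E] [HasSolidNorm E] [IsOrderedAddMonoid E] [NormedSpace ℝ E] : Prop :=
  ∀ f : ℕ → E →L[ℝ] ℝ, WeakStarNull f → Pairwise (fun n m => DualDisjoint (f n) (f m)) →
    ∀ x : E, 0 ≤ x → Tendsto (fun n => dualAbs (f n) x) atTop (𝓝 0)

/-- A Banach lattice `E` has the dual positive Schur property if every weak* null sequence of
positive functionals is norm null. -/
def DualPositiveSchur (E : Type*) [NormedAddCommGroup E] [Lattice E] [HasSolidNorm E] [IsOrderedAddMonoid E] [NormedSpace ℝ E] : Prop :=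
  ∀ f : ℕ → E →L[ℝ] ℝ, WeakStarNull f → (∀ n, PositiveFunctional (f n)) →
    Tendsto (fun n => ‖f n‖) atTop (𝓝 0)

/-- A Banach lattice `F` has the positive Schur property if every weakly null sequence of
positive elements is norm null. -/
def PositiveSchur (F : Type*) [NormedAddCommGroup F] [Lattice F] [HasSolidNorm F] [IsOrderedAddMonoid F] [NormedSpace ℝ F] : Prop :=
  ∀ x : ℕ → F, (∀ g : F →L[ℝ] ℝ, Tendsto (fun n => g (x n)) atTop (𝓝 0)) →
    (∀ n, 0 ≤ x n) → Tendsto (fun n => ‖x n‖) atTop (𝓝 0)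

/-- An operator is weakly compact if the image of the closed unit ball is relatively
compact in the weak topology. -/
def IsWeaklyCompactOp {X Y : Type*} [NormedAddCommGroup X] [NormedSpace ℝ X]
    [NormedAddCommGroup Y] [NormedSpace ℝ Y] (T : X →L[ℝ] Y) : Prop :=
  IsCompact (closure (toWeakSpaceCLM ℝ Y '' (T '' closedBall 0 1)))

/-- A lattice is σ-Dedekind complete if every countable nonempty order-bounded subset has a
supremum. -/
def SigmaDedekindComplete (E : Type*) [Lattice E] : Prop :=
  ∀ s : Set E, s.Countable → s.Nonempty → BddAbove s → ∃ a, IsLUB s a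

/-- The norm of a Banach lattice is order continuous if `x_α ↓ 0` implies `‖x_α‖ ↓ 0`,
for every decreasing net `(x_α)` with infimum `0`. -/
def HasOrderContinuousNorm (E : Type*) [NormedAddCommGroup E] [Lattice E] [HasSolidNorm E] [IsOrderedAddMonoid E] : Prop :=
  ∀ ⦃ι : Type*⦄ [Preorder ι] [Nonempty ι] [IsDirected ι (· ≤ ·)] (x : ι → E),
    Antitone x → IsGLB (Set.range x) 0 → Tendsto (fun i => ‖x i‖) atTop (𝓝 0)

/-- A Banach space is reflexive if the canonical embedding into its double dual is
surjective. -/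
def ReflexiveSpace (X : Type*) [NormedAddCommGroup X] [NormedSpace ℝ X] : Prop :=
  Function.Surjective (inclusionInDoubleDual ℝ X)

/-- The Banach lattice `ℓ^∞` of bounded real sequences. -/
abbrev LinftySeq : Type := ℕ →ᵇ ℝ

/-! Property (d) makes `|fₙ|` weak* null, so `fₙ⁺ = (|fₙ| + fₙ)/2` and `fₙ⁻ = (|fₙ| - fₙ)/2` are
weak* null positive functionals; they are pairwise disjoint because they are dominated by `|fₙ|`,
and `fₙ = fₙ⁺ - fₙ⁻` gives `‖T* fₙ‖ ≤ ‖T* fₙ⁺‖ + ‖T* fₙ⁻‖`.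

The modulus `|f|` is given on the positive cone by the Riesz–Kantorovich formula `dualAbs f`,
which is additive there by the Riesz decomposition property, and is extended to all of `E`
by `x ↦ |f| x⁺ - |f| x⁻`. -/

section LatticeOrderedGroup

variable {E : Type*} [AddCommGroup E] [Lattice E] [IsOrderedAddMonoid E]

theorem exists_abs_le_abs_sub_le_of_abs_le_add {x y z : E} (hx : 0 ≤ x) (hy : 0 ≤ y)
    (hz : |z| ≤ x + y) : ∃ u, |u| ≤ x ∧ |z - u| ≤ y := by
  obtain ⟨hz₁, hz₂⟩ := abs_le'.1 hz
  have hx' : -x ≤ z + y := by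
    rw [← sub_le_iff_le_add, ← neg_add']
    exact neg_le.1 hz₂
  refine ⟨(z ⊔ -x) ⊓ x, abs_le'.2 ⟨inf_le_right, neg_le.1 (le_inf le_sup_right (neg_le_self hx))⟩,
    abs_le'.2 ⟨?_, ?_⟩⟩
  · rw [sub_le_comm]
    exact le_inf ((sub_le_self z hy).trans le_sup_left) (sub_le_iff_le_add.2 hz₁)
  · rw [neg_sub, sub_le_iff_le_add, add_comm]
    exact inf_le_left.trans (sup_le (le_add_of_nonneg_right hy) hx')

theorem map_posPart_sub_map_negPart_add {G : Type*} [AddCommGroup G] (φ : E → G)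
    (hφ : ∀ x y, 0 ≤ x → 0 ≤ y → φ (x + y) = φ x + φ y) (x y : E) :
    φ (x + y)⁺ - φ (x + y)⁻ = (φ x⁺ - φ x⁻) + (φ y⁺ - φ y⁻) := by
  have key : (x + y)⁺ + (x⁻ + y⁻) = (x + y)⁻ + (x⁺ + y⁺) := by
    rw [← sub_eq_sub_iff_add_eq_add, sub_eq_sub_iff_sub_eq_sub, posPart_sub_negPart,
      add_sub_add_comm, posPart_sub_negPart, posPart_sub_negPart]
  have h := congrArg φ key
  rw [hφ _ _ (posPart_nonneg _) (add_nonneg (negPart_nonneg x) (negPart_nonneg y)),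
    hφ _ _ (negPart_nonneg _) (add_nonneg (posPart_nonneg x) (posPart_nonneg y)),
    hφ _ _ (negPart_nonneg x) (negPart_nonneg y),
    hφ _ _ (posPart_nonneg x) (posPart_nonneg y)] at h
  rw [sub_add_sub_comm, sub_eq_sub_iff_add_eq_add, h, add_comm]

end LatticeOrderedGroup

theorem abs_add_abs_le_abs_add_or_abs_sub (a b : ℝ) :
    |a| + |b| ≤ |a + b| ∨ |a| + |b| ≤ |a - b| := by
  simp only [le_abs]
  rcases le_total 0 a with ha | ha <;> rcases le_total 0 b with hb | hb <;>
    simp only [abs_of_nonneg, abs_of_nonpos, ha, hb] <;> [left; right; right; left] <;>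
    first | exact .inl (by linarith) | exact .inr (by linarith)

section BanachLattice

variable {E : Type*} [NormedAddCommGroup E] [Lattice E] [HasSolidNorm E] [IsOrderedAddMonoid E]
  [NormedSpace ℝ E] {f g : E →L[ℝ] ℝ} {x y z : E}

theorem abs_apply_le_opNorm_mul_of_abs_le (hz : |z| ≤ x) : |f z| ≤ ‖f‖ * ‖x‖ := by
  have hx : |x| = x := abs_of_nonneg ((abs_nonneg z).trans hz)
  calc |f z| = ‖f z‖ := (Real.norm_eq_abs _).symm
    _ ≤ ‖f‖ * ‖z‖ := f.le_opNorm z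
    _ ≤ ‖f‖ * ‖x‖ := by gcongr; exact norm_le_norm_of_abs_le_abs (hx.symm ▸ hz)

theorem le_dualAbs (hz : |z| ≤ x) : |f z| ≤ dualAbs f x :=
  le_csSup ⟨‖f‖ * ‖x‖, by rintro _ ⟨w, hw, rfl⟩; exact abs_apply_le_opNorm_mul_of_abs_le hw⟩
    ⟨z, hz, rfl⟩

theorem dualAbs_le {c : ℝ} (hx : 0 ≤ x) (h : ∀ z, |z| ≤ x → |f z| ≤ c) : dualAbs f x ≤ c :=
  csSup_le ⟨_, 0, by simpa using hx, rfl⟩ (by rintro _ ⟨z, hz, rfl⟩; exact h z hz)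

theorem abs_apply_le_dualAbs (hx : 0 ≤ x) : |f x| ≤ dualAbs f x :=
  le_dualAbs (abs_of_nonneg hx).le

theorem dualAbs_nonneg (hx : 0 ≤ x) : 0 ≤ dualAbs f x :=
  (abs_nonneg _).trans (abs_apply_le_dualAbs hx)

theorem dualAbs_le_opNorm_mul (hx : 0 ≤ x) : dualAbs f x ≤ ‖f‖ * ‖x‖ :=
  dualAbs_le hx fun _ hz => abs_apply_le_opNorm_mul_of_abs_le hz

theorem dualAbs_zero (f : E →L[ℝ] ℝ) : dualAbs f 0 = 0 :=
  le_antisymm (by simpa using dualAbs_le_opNorm_mul (f := f) le_rfl) (dualAbs_nonneg le_rfl)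

theorem PositiveFunctional.abs_apply_le_apply_abs (hg : PositiveFunctional g) (z : E) :
    |g z| ≤ g |z| := by
  have hpos := hg _ (posPart_nonneg z)
  have hneg := hg _ (negPart_nonneg z)
  rw [← posPart_add_negPart z, map_add]
  conv_lhs => rw [← posPart_sub_negPart z, map_sub]
  exact abs_sub_le_iff.2 ⟨by linarith, by linarith⟩

theorem PositiveFunctional.dualAbs_le_apply (hg : PositiveFunctional g) (hy : 0 ≤ y) :
    dualAbs g y ≤ g y :=
  dualAbs_le hy fun z hz => (hg.abs_apply_le_apply_abs z).trans <| by
    simpa using hg _ (sub_nonneg.2 hz)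

theorem dualAbs_add_le (hx : 0 ≤ x) (hy : 0 ≤ y) :
    dualAbs f (x + y) ≤ dualAbs f x + dualAbs f y := by
  refine dualAbs_le (add_nonneg hx hy) fun z hz => ?_
  obtain ⟨u, hu, hzu⟩ := exists_abs_le_abs_sub_le_of_abs_le_add hx hy hz
  calc |f z| = |f u + f (z - u)| := by rw [← map_add, add_sub_cancel]
    _ ≤ |f u| + |f (z - u)| := abs_add_le _ _
    _ ≤ dualAbs f x + dualAbs f y := add_le_add (le_dualAbs hu) (le_dualAbs hzu)

theorem add_dualAbs_le_dualAbs_add (hx : 0 ≤ x) (hy : 0 ≤ y) :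
    dualAbs f x + dualAbs f y ≤ dualAbs f (x + y) := by
  have key : ∀ z₁, |z₁| ≤ x → ∀ z₂, |z₂| ≤ y → |f z₁| + |f z₂| ≤ dualAbs f (x + y) := by
    intro z₁ hz₁ z₂ hz₂
    have hadd : |z₁ + z₂| ≤ x + y := (abs_add_le _ _).trans (add_le_add hz₁ hz₂)
    have hsub : |z₁ - z₂| ≤ x + y := by
      rw [sub_eq_add_neg]
      exact (abs_add_le _ _).trans (add_le_add hz₁ (by rwa [abs_neg]))
    rcases abs_add_abs_le_abs_add_or_abs_sub (f z₁) (f z₂) with h | h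
    · exact h.trans (by rw [← map_add]; exact le_dualAbs hadd)
    · exact h.trans (by rw [← map_sub]; exact le_dualAbs hsub)
  suffices dualAbs f x ≤ dualAbs f (x + y) - dualAbs f y by linarith
  refine dualAbs_le hx fun z₁ hz₁ => ?_
  suffices dualAbs f y ≤ dualAbs f (x + y) - |f z₁| by linarith
  exact dualAbs_le hy fun z₂ hz₂ => by linarith [key z₁ hz₁ z₂ hz₂]

theorem dualAbs_add (hx : 0 ≤ x) (hy : 0 ≤ y) : dualAbs f (x + y) = dualAbs f x + dualAbs f y :=
  (dualAbs_add_le hx hy).antisymm (add_dualAbs_le_dualAbs_add hx hy)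

theorem dualAbs_posPart_add_dualAbs_negPart (x : E) :
    dualAbs f x⁺ + dualAbs f x⁻ = dualAbs f |x| := by
  rw [← dualAbs_add (posPart_nonneg x) (negPart_nonneg x), posPart_add_negPart]

theorem abs_dualAbs_posPart_sub_dualAbs_negPart_le (x : E) :
    |dualAbs f x⁺ - dualAbs f x⁻| ≤ ‖f‖ * ‖x‖ := by
  have hpos := dualAbs_nonneg (f := f) (posPart_nonneg x)
  have hneg := dualAbs_nonneg (f := f) (negPart_nonneg x)
  calc |dualAbs f x⁺ - dualAbs f x⁻| ≤ dualAbs f |x| := by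
        rw [← dualAbs_posPart_add_dualAbs_negPart, abs_sub_le_iff]
        constructor <;> linarith
    _ ≤ ‖f‖ * ‖x‖ := norm_abs_eq_norm x ▸ dualAbs_le_opNorm_mul (abs_nonneg x)

def dualAbsCLM (f : E →L[ℝ] ℝ) : E →L[ℝ] ℝ :=
  let φ : E →+ ℝ := AddMonoidHom.mk' (fun x => dualAbs f x⁺ - dualAbs f x⁻)
    (map_posPart_sub_map_negPart_add _ fun _ _ => dualAbs_add)
  φ.toRealLinearMap <| LipschitzWith.continuous <|
    AddMonoidHomClass.lipschitz_of_bound φ ‖f‖ abs_dualAbs_posPart_sub_dualAbs_negPart_le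

theorem dualAbsCLM_apply (f : E →L[ℝ] ℝ) (x : E) :
    dualAbsCLM f x = dualAbs f x⁺ - dualAbs f x⁻ :=
  rfl

theorem dualAbsCLM_apply_of_nonneg (hx : 0 ≤ x) : dualAbsCLM f x = dualAbs f x := by
  rw [dualAbsCLM_apply, posPart_eq_self.2 hx, negPart_eq_zero.2 hx, dualAbs_zero, sub_zero]

def dualPosPart (f : E →L[ℝ] ℝ) : E →L[ℝ] ℝ := (2⁻¹ : ℝ) • (dualAbsCLM f + f)

def dualNegPart (f : E →L[ℝ] ℝ) : E →L[ℝ] ℝ := (2⁻¹ : ℝ) • (dualAbsCLM f - f)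

theorem dualPosPart_apply (f : E →L[ℝ] ℝ) (x : E) :
    dualPosPart f x = 2⁻¹ * (dualAbsCLM f x + f x) :=
  rfl

theorem dualNegPart_apply (f : E →L[ℝ] ℝ) (x : E) :
    dualNegPart f x = 2⁻¹ * (dualAbsCLM f x - f x) :=
  rfl

theorem dualPosPart_sub_dualNegPart (f : E →L[ℝ] ℝ) : dualPosPart f - dualNegPart f = f := by
  ext x
  rw [_root_.sub_apply, dualPosPart_apply, dualNegPart_apply]
  ring

theorem positiveFunctional_dualPosPart (f : E →L[ℝ] ℝ) :
    PositiveFunctional (dualPosPart f) := fun x hx => by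
  rw [dualPosPart_apply, dualAbsCLM_apply_of_nonneg hx]
  linarith [neg_abs_le (f x), abs_apply_le_dualAbs (f := f) hx]

theorem positiveFunctional_dualNegPart (f : E →L[ℝ] ℝ) :
    PositiveFunctional (dualNegPart f) := fun x hx => by
  rw [dualNegPart_apply, dualAbsCLM_apply_of_nonneg hx]
  linarith [le_abs_self (f x), abs_apply_le_dualAbs (f := f) hx]

theorem DualDisjoint.mono {f' g' : E →L[ℝ] ℝ} (h : DualDisjoint f g)
    (hf : ∀ y, 0 ≤ y → dualAbs f' y ≤ dualAbs f y)
    (hg : ∀ y, 0 ≤ y → dualAbs g' y ≤ dualAbs g y) : DualDisjoint f' g' := by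
  intro x hx ε hε
  obtain ⟨y, hy₀, hyx, hsum⟩ := h x hx ε hε
  exact ⟨y, hy₀, hyx, by linarith [hf y hy₀, hg (x - y) (sub_nonneg.2 hyx)]⟩

theorem dualAbs_dualPosPart_le (hy : 0 ≤ y) : dualAbs (dualPosPart f) y ≤ dualAbs f y := by
  refine ((positiveFunctional_dualPosPart f).dualAbs_le_apply hy).trans ?_
  rw [dualPosPart_apply, dualAbsCLM_apply_of_nonneg hy]
  linarith [le_abs_self (f y), abs_apply_le_dualAbs (f := f) hy]

theorem dualAbs_dualNegPart_le (hy : 0 ≤ y) : dualAbs (dualNegPart f) y ≤ dualAbs f y := by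
  refine ((positiveFunctional_dualNegPart f).dualAbs_le_apply hy).trans ?_
  rw [dualNegPart_apply, dualAbsCLM_apply_of_nonneg hy]
  linarith [neg_abs_le (f y), abs_apply_le_dualAbs (f := f) hy]

theorem DualDisjoint.dualPosPart (h : DualDisjoint f g) :
    DualDisjoint (dualPosPart f) (dualPosPart g) :=
  h.mono (fun _ => dualAbs_dualPosPart_le) (fun _ => dualAbs_dualPosPart_le)

theorem DualDisjoint.dualNegPart (h : DualDisjoint f g) :
    DualDisjoint (dualNegPart f) (dualNegPart g) :=
  h.mono (fun _ => dualAbs_dualNegPart_le) (fun _ => dualAbs_dualNegPart_le)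

section WeakStar

variable {f : ℕ → E →L[ℝ] ℝ}

theorem weakStarNull_dualAbsCLM
    (habs : ∀ x, 0 ≤ x → Tendsto (fun n => dualAbs (f n) x) atTop (𝓝 0)) :
    WeakStarNull fun n => dualAbsCLM (f n) := fun x => by
  simpa only [dualAbsCLM_apply, sub_zero] using
    (habs _ (posPart_nonneg x)).sub (habs _ (negPart_nonneg x))

theorem WeakStarNull.dualPosPart (hf : WeakStarNull f)
    (habs : ∀ x, 0 ≤ x → Tendsto (fun n => dualAbs (f n) x) atTop (𝓝 0)) :
    WeakStarNull fun n => dualPosPart (f n) := fun x => by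
  simpa only [dualPosPart_apply, add_zero, mul_zero] using
    ((weakStarNull_dualAbsCLM habs x).add (hf x)).const_mul 2⁻¹

theorem WeakStarNull.dualNegPart (hf : WeakStarNull f)
    (habs : ∀ x, 0 ≤ x → Tendsto (fun n => dualAbs (f n) x) atTop (𝓝 0)) :
    WeakStarNull fun n => dualNegPart (f n) := fun x => by
  simpa only [dualNegPart_apply, sub_zero, mul_zero] using
    ((weakStarNull_dualAbsCLM habs x).sub (hf x)).const_mul 2⁻¹

end WeakStar

theorem norm_comp_le_dualPosPart_add_dualNegPart {X : Type*} [NormedAddCommGroup X]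
    [NormedSpace ℝ X] (f : E →L[ℝ] ℝ) (T : X →L[ℝ] E) :
    ‖f.comp T‖ ≤ ‖(dualPosPart f).comp T‖ + ‖(dualNegPart f).comp T‖ := by
  conv_lhs => rw [← dualPosPart_sub_dualNegPart f, ContinuousLinearMap.sub_comp]
  exact norm_sub_le _ _

end BanachLattice

theorem almostLimited_iff_positive_disjoint_general
    {X E : Type*} [NormedAddCommGroup X] [NormedSpace ℝ X]
    [NormedAddCommGroup E] [Lattice E] [HasSolidNorm E] [IsOrderedAddMonoid E] [NormedSpace ℝ E]
    (hE : PropertyD E) (T : X →L[ℝ] E) :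
    AlmostLimited T ↔
      ∀ f : ℕ → E →L[ℝ] ℝ, WeakStarNull f → (∀ n, PositiveFunctional (f n)) →
        Pairwise (fun n m => DualDisjoint (f n) (f m)) →
        Tendsto (fun n => ‖(f n).comp T‖) atTop (𝓝 0) := by
  refine ⟨fun hT f hf _ hdisj => hT f hf hdisj, fun hT f hf hdisj => ?_⟩
  have habs := hE f hf hdisj
  have hpos := hT _ (hf.dualPosPart habs) (fun n => positiveFunctional_dualPosPart (f n))
    fun _ _ hnm => (hdisj hnm).dualPosPart
  have hneg := hT _ (hf.dualNegPart habs) (fun n => positiveFunctional_dualNegPart (f n))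
    fun _ _ hnm => (hdisj hnm).dualNegPart
  exact squeeze_zero (fun n => norm_nonneg _)
    (fun n => norm_comp_le_dualPosPart_add_dualNegPart (f n) T) (by simpa using hpos.add hneg)

/-- An operator `T : X → E` into a Banach lattice with property (d) is almost
limited iff `‖T* fₙ‖ → 0` for every weak* null sequence of positive pairwise disjoint
functionals. -/
theorem almostLimited_iff_positive_disjoint
    {X E : Type*} [NormedAddCommGroup X] [NormedSpace ℝ X] [CompleteSpace X]
    [NormedAddCommGroup E] [Lattice E] [HasSolidNorm E] [IsOrderedAddMonoid E] [NormedSpace ℝ E] [PosSMulStrictMono ℝ E] [CompleteSpace E]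
    (hE : PropertyD E) (T : X →L[ℝ] E) :
    AlmostLimited T ↔
      ∀ f : ℕ → E →L[ℝ] ℝ, WeakStarNull f → (∀ n, PositiveFunctional (f n)) →
        Pairwise (fun n m => DualDisjoint (f n) (f m)) →
        Tendsto (fun n => ‖(f n).comp T‖) atTop (𝓝 0) :=
  almostLimited_iff_positive_disjoint_general hE T
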